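/- Let M ≥ 3, π ∈ B_M, and let yz (with 0 < y < z) be a side boundary edge of L_π with respect to B_M. Then: π contains at most one copy of e; y < z−1; L_π has an (M−1)-fan at y while L_{π'} has an M-fan at y; and z = y + M if π(y−2) ≠ e, whereas z = y + M − 1 if π(y−2) = e. -/

import Mathlib

noncomputable section

namespace TriangleRemoval

/-- The alphabet `{e, 0, 1}` of triangular-ladder words. -/
inductive Sym : Type
  | e : Sym
  | zero : Sym
  | one : Sym
deriving DecidableEq

/-- `nth π j` is the `j`-th symbol of `π` (1-based), if it exists. -/
def nth (π : List Sym) (j : ℕ) : Option Sym :=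
  if j = 0 then none else π[j - 1]?

/-- One construction step of a triangular ladder. The state is
`(k, o, E)`: the last vertex `k`, the backward neighbor `o` of `k` other than `k - 1`
(junk if the last symbol was `e`), and the current edge set `E`. -/
def ladderStep : ℕ × ℕ × Set (Sym2 ℕ) → Sym → ℕ × ℕ × Set (Sym2 ℕ)
  | (k, _, E), Sym.one => (k + 1, k - 1, insert s(k - 1, k + 1) (insert s(k, k + 1) E))
  | (k, o, E), Sym.zero => (k + 1, o, insert s(o, k + 1) (insert s(k, k + 1) E))
  | (k, _, E), Sym.e => (k + 1, 0, insert s(k, k + 1) E)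

/-- The initial state of the construction, according to the first symbol:
`L_1` has edges `{02, 12}`, `L_e` has the single edge `12`. -/
def ladderInit : Sym → ℕ × ℕ × Set (Sym2 ℕ)
  | Sym.one => (2, 0, {s(0, 2), s(1, 2)})
  | _ => (2, 0, {s(1, 2)})

/-- The data of the triangular ladder built from the word `π`. -/
def ladderData : List Sym → ℕ × ℕ × Set (Sym2 ℕ)
  | [] => (1, 0, ∅)
  | a :: rest => rest.foldl ladderStep (ladderInit a)

/-- The triangular ladder `L_π`, a graph on `{0, 1, …, |π|+1} ⊆ ℕ`. -/
def ladder (π : List Sym) : SimpleGraph ℕ :=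
  SimpleGraph.fromEdgeSet (ladderData π).2.2

/-- `L_π` has an `f`-fan at the vertex `a > 0`. -/
def hasFanAt (π : List Sym) (f a : ℕ) : Prop :=
  0 < a ∧
    ((nth π (a - 2) ≠ some Sym.e ∧
        ∀ b ∈ Finset.Icc (a + 1) (a + f + 1), (ladder π).Adj a b) ∨
     (nth π (a - 2) = some Sym.e ∧ (ladder π).Adj a (a - 1) ∧
        ∀ b ∈ Finset.Icc (a + 1) (a + f), (ladder π).Adj a b))

/-- `L_π` contains an `f`-fan. -/
def hasFan (π : List Sym) (f : ℕ) : Prop := ∃ a, hasFanAt π f a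

/-- Membership in `Π`: no `0` in positions 1 or 2, at most two occurrences of `e`, and
no substrings `e0`, `e10`, `e1e`. -/
def memPi (π : List Sym) : Prop :=
  nth π 1 ≠ some Sym.zero ∧ nth π 2 ≠ some Sym.zero ∧ π.count Sym.e ≤ 2 ∧
    ¬ [Sym.e, Sym.zero] <:+: π ∧ ¬ [Sym.e, Sym.one, Sym.zero] <:+: π ∧
    ¬ [Sym.e, Sym.one, Sym.e] <:+: π

/-- Membership in `B_M`: `π ∈ Π` is nonempty, contains no `M`-fan, and satisfies the
length restrictions according to the number of occurrences of `e`. -/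
def memB (M : ℕ) (π : List Sym) : Prop :=
  memPi π ∧ π ≠ [] ∧ ¬ hasFan π M ∧
    ((π.count Sym.e = 0 ∧ π.length ≤ 3 * M - 1) ∨
     (π.count Sym.e = 1 ∧ π.length ≤ 2 * M ∧ nth π (2 * M) ≠ some Sym.e) ∨
     (π.count Sym.e = 2 ∧ π.length ≤ M + 1 ∧ nth π (M + 1) ≠ some Sym.e))

/-- `π' = π_{z-1} ∘ 0` if `y < z-1` and `π' = π_{z-1} ∘ 1` if `y = z-1`. -/
def boundaryWord (π : List Sym) (y z : ℕ) : List Sym :=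
  π.take (z - 1) ++ [if y < z - 1 then Sym.zero else Sym.one]

/-- `yz` is a boundary edge of `L_π` with respect to `B_M`. -/
def IsBoundaryEdge (M : ℕ) (π : List Sym) (y z : ℕ) : Prop :=
  0 < y ∧ y < z ∧ (ladder π).Adj y z ∧ nth π y ≠ some Sym.e ∧
    ¬ memB M (boundaryWord π y z)

/-- `yz` is an outer boundary edge of `L_π` with respect to `B_M`. -/
def IsOuterBoundaryEdge (M : ℕ) (π : List Sym) (y z : ℕ) : Prop :=
  IsBoundaryEdge M π y z ∧ z = π.length + 1 ∧
    ((π.count Sym.e = 0 ∧ π.length = 3 * M - 1) ∨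
     (π.count Sym.e = 1 ∧ π.length = 2 * M) ∨
     (π.count Sym.e = 2 ∧ π.length = M + 1))

/-- `yz` is a side boundary edge of `L_π` with respect to `B_M`. -/
def IsSideBoundaryEdge (M : ℕ) (π : List Sym) (y z : ℕ) : Prop :=
  IsBoundaryEdge M π y z ∧ ¬ IsOuterBoundaryEdge M π y z

/-!
Write `π' = π_{z-1} ∘ σ`. Because `yz` is an edge of `L_π` and `π(y) ≠ e`, the word `π'` lies in
`Π`, and because `yz` is not an outer boundary edge, `π'` obeys the length restrictions of `B_M`;
so `π' ∉ B_M` means that `L_{π'}` has an `M`-fan. Now `L_{π'}` is `L_{π_{z-1}} ⊆ L_π` together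
with the new vertex `z + 1` joined to `z` and to `y`, and `L_π` has no `M`-fan. Hence the fan sits
at `y` and has `z + 1` as its top vertex, which determines `z`, and removing `z + 1` leaves an
`(M-1)`-fan of `L_π`. Finally two copies of `e` would force `|π| ≤ M + 1`: if `π(y-2) ≠ e` the
`M` positions `y, …, z-1` of the fan carry no `e`, leaving room for at most one, and if
`π(y-2) = e` then `z = |π| + 1 = M + 2` and `yz` would be an outer boundary edge.
-/

section Words

variable {π : List Sym} {a : Sym} {j n : ℕ}

lemma nth_take (hj : j ≤ n) : nth (π.take n) j = nth π j := by
  unfold nth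
  split_ifs with h0
  · rfl
  · rw [List.getElem?_take, if_pos (by omega)]

lemma nth_append_singleton_of_le (hj : j ≤ π.length) : nth (π ++ [a]) j = nth π j := by
  unfold nth
  split_ifs with h0
  · rfl
  · exact List.getElem?_append_left (by omega)

lemma nth_append_singleton_self : nth (π ++ [a]) (π.length + 1) = some a := by
  simp [nth]

lemma nth_eq_none_of_length_lt (hj : π.length < j) : nth π j = none := by
  unfold nth
  split_ifs
  · rfl
  · exact List.getElem?_eq_none (by omega)

lemma le_length_of_nth_eq_some (h : nth π j = some a) : 1 ≤ j ∧ j ≤ π.length := by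
  unfold nth at h
  split_ifs at h with h0
  exact ⟨by omega, by have := (List.getElem?_eq_some_iff.mp h).1; omega⟩

lemma nth_append_singleton_ne {b : Sym} (hab : b ≠ a) (hj : π.length < j) :
    nth (π ++ [b]) j ≠ some a := by
  rcases (Nat.succ_le_of_lt hj).eq_or_lt with rfl | hlt
  · simpa [nth_append_singleton_self] using hab
  · rw [nth_eq_none_of_length_lt (by rw [List.length_append, List.length_singleton]; omega)]
    simp

lemma exists_take_eq_append_singleton (h1 : 1 ≤ n) (h2 : n ≤ π.length) :
    ∃ c, nth π n = some c ∧ π.take n = π.take (n - 1) ++ [c] := by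
  obtain ⟨m, rfl⟩ : ∃ m, n = m + 1 := ⟨n - 1, by omega⟩
  refine ⟨π[m], by simp [nth], ?_⟩
  rw [List.take_add_one, List.getElem?_eq_getElem (show m < π.length by omega)]
  rfl

lemma singleton_suffix_take_iff (h1 : 1 ≤ n) (h2 : n ≤ π.length) :
    [a] <:+ π.take n ↔ nth π n = some a := by
  obtain ⟨c, hc, htake⟩ := exists_take_eq_append_singleton h1 h2
  rw [htake, List.singleton_suffix_append_singleton_iff, hc, Option.some_inj, eq_comm]

lemma append_singleton_suffix_append_singleton_iff {α : Type*} {l ρ : List α} {a b : α} :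
    l ++ [a] <:+ ρ ++ [b] ↔ a = b ∧ l <:+ ρ := by
  simp [List.suffix_concat_iff]

lemma infix_or_suffix_of_infix_take_append {α : Type*} {l ρ : List α} {a b : α} {n : ℕ}
    (h : l ++ [a] <:+: ρ.take n ++ [b]) : l ++ [a] <:+: ρ ∨ (a = b ∧ l <:+ ρ.take n) := by
  rcases List.infix_concat_iff.mp h with h | h
  · exact Or.inr (append_singleton_suffix_append_singleton_iff.mp h)
  · exact Or.inl (h.trans (List.take_prefix n ρ).isInfix)

lemma count_add_le_length {lo hi : ℕ} (hlo : 1 ≤ lo) (hhi : hi ≤ π.length)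
    (h : ∀ j ∈ Finset.Icc lo hi, nth π j ≠ some a) : π.count a + (hi + 1 - lo) ≤ π.length := by
  set mid := (π.drop (lo - 1)).take (hi + 1 - lo)
  have hmid_len : mid.length = hi + 1 - lo := by rw [List.length_take, List.length_drop]; omega
  have hmid : mid.count a = 0 := by
    refine List.count_eq_zero.mpr fun hmem => ?_
    obtain ⟨i, hi', hget⟩ := List.getElem_of_mem hmem
    refine h (lo + i) (Finset.mem_Icc.mpr ⟨by omega, by omega⟩) ?_
    rw [nth, if_neg (by omega), show lo + i - 1 = lo - 1 + i by omega, ← List.getElem?_drop,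
      ← List.getElem?_take_of_lt (j := hi + 1 - lo) (by omega), List.getElem?_eq_getElem hi', hget]
  have hsplit : π.take (lo - 1) ++ mid ++ (π.drop (lo - 1)).drop (hi + 1 - lo) = π := by
    rw [List.append_assoc, List.take_append_drop, List.take_append_drop]
  have hlen := congrArg List.length hsplit
  have hcnt := congrArg (List.count a) hsplit
  simp only [List.length_append, List.count_append, hmid] at hlen hcnt
  have := (π.take (lo - 1)).count_le_length (a := a)
  have := ((π.drop (lo - 1)).drop (hi + 1 - lo)).count_le_length (a := a)
  omega

end Words

section Ladder

def ladderEdges (π : List Sym) : Set (Sym2 ℕ) := (ladderData π).2.2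

def backNbr (π : List Sym) : ℕ := (ladderData π).2.1

lemma ladder_adj {π : List Sym} {u v : ℕ} :
    (ladder π).Adj u v ↔ s(u, v) ∈ ladderEdges π ∧ u ≠ v :=
  SimpleGraph.fromEdgeSet_adj _

@[elab_as_elim]
theorem induction_ne_nil {motive : (π : List Sym) → π ≠ [] → Prop}
    (singleton : ∀ s, motive [s] (List.cons_ne_nil s []))
    (append_singleton : ∀ π s (hπ : π ≠ []), motive π hπ → motive (π ++ [s]) (by simp))
    (π : List Sym) (hπ : π ≠ []) : motive π hπ := by
  induction π using List.reverseRecOn with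
  | nil => exact absurd rfl hπ
  | append_singleton π s ih =>
    rcases eq_or_ne π [] with rfl | hπ'
    · exact singleton s
    · exact append_singleton π s hπ' (ih hπ')

variable {π : List Sym}

lemma ladderData_append_singleton (hπ : π ≠ []) (s : Sym) :
    ladderData (π ++ [s]) = ladderStep (ladderData π) s := by
  obtain ⟨a, rest, rfl⟩ := List.exists_cons_of_ne_nil hπ
  simp [ladderData, List.foldl_append]

lemma fst_ladderData (hπ : π ≠ []) : (ladderData π).1 = π.length + 1 := by
  induction π, hπ using induction_ne_nil with
  | singleton s => cases s <;> rfl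
  | append_singleton π s hπ ih =>
    rw [ladderData_append_singleton hπ]
    generalize ladderData π = d at ih
    obtain ⟨k, o, E⟩ := d
    cases s <;> simp_all [ladderStep]

lemma backNbr_append_one : backNbr (π ++ [Sym.one]) = π.length := by
  rcases eq_or_ne π [] with rfl | hπ
  · rfl
  · have hk := fst_ladderData hπ
    rw [backNbr, ladderData_append_singleton hπ]
    generalize ladderData π = d at hk
    obtain ⟨k, o, E⟩ := d
    simp_all [ladderStep]

lemma backNbr_append_zero (hπ : π ≠ []) : backNbr (π ++ [Sym.zero]) = backNbr π := by
  rw [backNbr, backNbr, ladderData_append_singleton hπ]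
  obtain ⟨k, o, E⟩ := ladderData π
  rfl

lemma mem_ladderEdges_singleton {s : Sym} {x : Sym2 ℕ} :
    x ∈ ladderEdges [s] ↔ x = s(1, 2) ∨ (s = Sym.one ∧ x = s(0, 2)) := by
  cases s <;> simp [ladderEdges, ladderData, ladderInit, or_comm]

lemma mem_ladderEdges_append_singleton (hπ : π ≠ []) {s : Sym} {x : Sym2 ℕ} :
    x ∈ ladderEdges (π ++ [s]) ↔ x ∈ ladderEdges π ∨ x = s(π.length + 1, π.length + 2) ∨
      (s = Sym.one ∧ x = s(π.length, π.length + 2)) ∨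
      (s = Sym.zero ∧ x = s(backNbr π, π.length + 2)) := by
  have hk := fst_ladderData hπ
  rw [ladderEdges, ladderEdges, backNbr, ladderData_append_singleton hπ]
  generalize ladderData π = d at hk
  obtain ⟨k, o, E⟩ := d
  subst hk
  cases s <;> simp only [ladderStep, Set.mem_insert_iff, add_tsub_cancel_right, true_and,
    reduceCtorEq, false_and, or_false, false_or] <;> tauto

lemma backNbr_lt_length (hπ : π ≠ []) : backNbr π < π.length := by
  induction π, hπ using induction_ne_nil with
  | singleton s => cases s <;> simp [backNbr, ladderData, ladderInit]
  | append_singleton π s hπ ih =>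
    cases s
    · simp [backNbr, ladderData_append_singleton hπ, ladderStep]
    · rw [backNbr_append_zero hπ, List.length_append]; omega
    · simp [backNbr_append_one]

lemma le_of_mem_ladderEdges {u v : ℕ} (h : s(u, v) ∈ ladderEdges π) : v ≤ π.length + 1 := by
  rcases eq_or_ne π [] with rfl | hπ
  · simp [ladderEdges, ladderData] at h
  induction π, hπ using induction_ne_nil generalizing u with
  | singleton s =>
    rw [mem_ladderEdges_singleton] at h
    rw [List.length_singleton]
    rcases h with h | ⟨-, h⟩ <;> rw [Sym2.eq_iff] at h <;> omega
  | append_singleton π s hπ ih =>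
    have := backNbr_lt_length hπ
    rw [mem_ladderEdges_append_singleton hπ] at h
    simp only [List.length_append, List.length_singleton]
    rcases h with h | h | ⟨-, h⟩ | ⟨-, h⟩
    · have := ih h; omega
    all_goals simp only [Sym2.eq_iff] at h; omega

lemma ladderEdges_subset_append (ρ : List Sym) : ladderEdges π ⊆ ladderEdges (π ++ ρ) := by
  rcases eq_or_ne π [] with rfl | hπ
  · simp [ladderEdges, ladderData]
  induction ρ using List.reverseRecOn with
  | nil => simp
  | append_singleton ρ s ih =>
    rw [← List.append_assoc]
    exact ih.trans fun x hx => (mem_ladderEdges_append_singleton (by simp [hπ])).mpr (Or.inl hx)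

lemma ladder_take_le (n : ℕ) : ladder (π.take n) ≤ ladder π := by
  intro u v huv
  have hsub := ladderEdges_subset_append (π := π.take n) (π.drop n)
  rw [List.take_append_drop] at hsub
  rw [ladder_adj] at huv ⊢
  exact ⟨hsub huv.1, huv.2⟩

lemma mem_ladderEdges_of_add_one_lt {u v : ℕ} (h : s(u, v) ∈ ladderEdges π) (huv : u + 1 < v) :
    (nth π (v - 1) = some Sym.one ∧ u = v - 2 ∨ nth π (v - 1) = some Sym.zero) ∧
      backNbr (π.take (v - 1)) = u := by
  rcases eq_or_ne π [] with rfl | hπ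
  · simp [ladderEdges, ladderData] at h
  induction π, hπ using induction_ne_nil with
  | singleton s =>
    rw [mem_ladderEdges_singleton] at h
    rcases h with h | ⟨rfl, h⟩ <;> simp only [Sym2.eq_iff] at h
    · omega
    · obtain ⟨rfl, rfl⟩ : u = 0 ∧ v = 2 := by omega
      simp [nth, backNbr, ladderData, ladderInit]
  | append_singleton π s hπ ih =>
    have hlt := backNbr_lt_length hπ
    rw [mem_ladderEdges_append_singleton hπ] at h
    rcases h with h | h | ⟨rfl, h⟩ | ⟨rfl, h⟩
    · have hv := le_of_mem_ladderEdges h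
      rw [nth_append_singleton_of_le (by omega), List.take_append_of_le_length (by omega)]
      exact ih h
    all_goals simp only [Sym2.eq_iff] at h
    · omega
    · obtain ⟨rfl, rfl⟩ : u = π.length ∧ v = π.length + 2 := by omega
      simp [nth_append_singleton_self, List.take_of_length_le, backNbr_append_one]
    · obtain ⟨rfl, rfl⟩ : u = backNbr π ∧ v = π.length + 2 := by omega
      simp [nth_append_singleton_self, List.take_of_length_le, backNbr_append_zero hπ]

lemma le_of_ladder_adj {u v : ℕ} (h : (ladder π).Adj u v) : v ≤ π.length + 1 :=
  le_of_mem_ladderEdges (ladder_adj.mp h).1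

end Ladder

section Fans

/-- The neighbours that an `f`-fan at `a` requires, `c` being the symbol `π(a - 2)`. -/
def fanVertices (c : Option Sym) (f a : ℕ) : Finset ℕ :=
  if c = some Sym.e then insert (a - 1) (Finset.Icc (a + 1) (a + f))
  else Finset.Icc (a + 1) (a + f + 1)

def fanTop (c : Option Sym) (f a : ℕ) : ℕ :=
  if c = some Sym.e then a + f else a + f + 1

lemma hasFanAt_iff {π : List Sym} {f a : ℕ} :
    hasFanAt π f a ↔ 0 < a ∧ ∀ b ∈ fanVertices (nth π (a - 2)) f a, (ladder π).Adj a b := by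
  unfold hasFanAt fanVertices
  split_ifs with h <;> simp [h]

variable {c : Option Sym} {f a b : ℕ}

lemma le_fanTop (hb : b ∈ fanVertices c f a) : b ≤ fanTop c f a := by
  unfold fanVertices at hb
  unfold fanTop
  split_ifs at hb ⊢ <;> simp only [Finset.mem_insert, Finset.mem_Icc] at hb <;> omega

lemma fanTop_mem (hf : 1 ≤ f) : fanTop c f a ∈ fanVertices c f a := by
  unfold fanVertices fanTop
  split_ifs <;> simp only [Finset.mem_insert, Finset.mem_Icc] <;> omega

lemma add_le_fanTop : a + f ≤ fanTop c f a := by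
  unfold fanTop
  split_ifs <;> omega

lemma fanVertices_pred_subset (hf : 1 ≤ f) :
    fanVertices c (f - 1) a ⊆ (fanVertices c f a).erase (fanTop c f a) := by
  intro b hb
  unfold fanVertices at hb ⊢
  unfold fanTop
  split_ifs at hb ⊢ <;> simp only [Finset.mem_erase, Finset.mem_insert, Finset.mem_Icc] at hb ⊢ <;>
    omega

end Fans

section BoundaryWord

variable {π : List Sym} {y z : ℕ}

lemma length_boundaryWord (hyz : y < z) (hz : z ≤ π.length + 1) :
    (boundaryWord π y z).length = z := by
  simp only [boundaryWord, List.length_append, List.length_take, List.length_singleton]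
  omega

lemma nth_boundaryWord_of_le {j : ℕ} (hz : z ≤ π.length + 1) (hj : j ≤ z - 1) :
    nth (boundaryWord π y z) j = nth π j := by
  rw [boundaryWord, nth_append_singleton_of_le (by rw [List.length_take]; omega), nth_take hj]

lemma nth_boundaryWord_ne_e {j : ℕ} (hyz : y < z) (hj : z ≤ j) :
    nth (boundaryWord π y z) j ≠ some Sym.e :=
  nth_append_singleton_ne (by split_ifs <;> simp) (by rw [List.length_take]; omega)

lemma count_boundaryWord_le : (boundaryWord π y z).count Sym.e ≤ π.count Sym.e := by
  have : [if y < z - 1 then Sym.zero else Sym.one].count Sym.e = 0 := by split_ifs <;> rfl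
  rw [boundaryWord, List.count_append, this, add_zero]
  exact (List.take_sublist _ _).count_le _

lemma mem_ladderEdges_boundaryWord (hy : 0 < y) (hyz : y < z) (hedge : s(y, z) ∈ ladderEdges π)
    {x : Sym2 ℕ} (hx : x ∈ ladderEdges (boundaryWord π y z)) :
    x ∈ ladderEdges (π.take (z - 1)) ∨ x = s(z, z + 1) ∨ x = s(y, z + 1) := by
  have hz := le_of_mem_ladderEdges hedge
  have hlen : (π.take (z - 1)).length = z - 1 := by rw [List.length_take]; omega
  have hne : π.take (z - 1) ≠ [] := by
    intro h; rw [h, List.length_nil] at hlen; omega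
  rw [boundaryWord, mem_ladderEdges_append_singleton hne, hlen,
    show z - 1 + 1 = z by omega, show z - 1 + 2 = z + 1 by omega] at hx
  rcases hx with hx | hx | ⟨hσ, rfl⟩ | ⟨hσ, rfl⟩
  · exact Or.inl hx
  · exact Or.inr (Or.inl hx)
  · split_ifs at hσ
    exact Or.inr (Or.inr (by rw [show z - 1 = y by omega]))
  · split_ifs at hσ with hlt
    rw [(mem_ladderEdges_of_add_one_lt hedge (by omega)).2]
    exact Or.inr (Or.inr rfl)

lemma adj_boundaryWord {a b : ℕ} (hy : 0 < y) (hyz : y < z) (hadj : (ladder π).Adj y z)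
    (ha : a < z) (hab : (ladder (boundaryWord π y z)).Adj a b) :
    (ladder π).Adj a b ∨ (a = y ∧ b = z + 1) := by
  obtain ⟨hx, hne⟩ := ladder_adj.mp hab
  rcases mem_ladderEdges_boundaryWord hy hyz (ladder_adj.mp hadj).1 hx with hx | hx | hx
  · exact Or.inl (ladder_take_le (z - 1) (ladder_adj.mpr ⟨hx, hne⟩))
  all_goals rw [Sym2.eq_iff] at hx; omega

lemma memPi_boundaryWord (hπ : memPi π) (hy : 0 < y) (hyz : y < z)
    (hedge : s(y, z) ∈ ladderEdges π) (hπy : nth π y ≠ some Sym.e) :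
    memPi (boundaryWord π y z) := by
  obtain ⟨h1, h2, hcount, he0, he10, he1e⟩ := hπ
  have hz := le_of_mem_ladderEdges hedge
  have hzero : (if y < z - 1 then Sym.zero else Sym.one) = Sym.zero → y + 1 < z := by
    split_ifs with hlt <;> intro hσ
    · omega
    · cases hσ
  refine ⟨?_, ?_, count_boundaryWord_le.trans hcount, fun h => ?_, fun h => ?_, fun h => ?_⟩
  · rwa [nth_boundaryWord_of_le hz (by omega)]
  · rcases Nat.lt_or_ge 2 z with h3 | h3
    · rwa [nth_boundaryWord_of_le hz (by omega)]
    · obtain ⟨rfl, rfl⟩ : y = 1 ∧ z = 2 := by omega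
      have := nth_append_singleton_self (π := π.take 1) (a := Sym.one)
      simp_all [boundaryWord]
  · rcases infix_or_suffix_of_infix_take_append (l := [Sym.e]) h with h | ⟨hσ, h⟩
    · exact he0 h
    rw [singleton_suffix_take_iff (by omega) (by omega)] at h
    rcases (mem_ladderEdges_of_add_one_lt hedge (hzero hσ.symm)).1 with ⟨h', -⟩ | h' <;>
      simp [h'] at h
  · rcases infix_or_suffix_of_infix_take_append (l := [Sym.e, Sym.one]) h with h | ⟨hσ, h⟩
    · exact he10 h
    obtain ⟨c, hc, htake⟩ := exists_take_eq_append_singleton (π := π) (n := z - 1) (by omega)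
      (by omega)
    rw [htake, show [Sym.e, Sym.one] = [Sym.e] ++ [Sym.one] from rfl,
      append_singleton_suffix_append_singleton_iff] at h
    obtain ⟨rfl, hsuf⟩ := h
    -- `π(z - 1) = 1` puts the `e` at position `z - 2 = y`
    rcases (mem_ladderEdges_of_add_one_lt hedge (hzero hσ.symm)).1 with ⟨-, rfl⟩ | h'
    · exact hπy ((singleton_suffix_take_iff (by omega) (by omega)).mp hsuf)
    · simp [h'] at hc
  · rcases infix_or_suffix_of_infix_take_append (l := [Sym.e, Sym.one]) h with h | ⟨hσ, -⟩
    · exact he1e h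
    · split_ifs at hσ

end BoundaryWord

section LengthBound

def maxLength (M c : ℕ) : ℕ :=
  if c = 0 then 3 * M - 1 else if c = 1 then 2 * M else M + 1

variable {M : ℕ} {π : List Sym} {y z : ℕ}

lemma maxLength_two : maxLength M 2 = M + 1 := rfl

lemma length_le_maxLength (hπ : memB M π) : π.length ≤ maxLength M (π.count Sym.e) := by
  obtain ⟨-, -, -, ⟨hc, hl⟩ | ⟨hc, hl, -⟩ | ⟨hc, hl, -⟩⟩ := hπ <;> simpa [maxLength, hc] using hl

lemma maxLength_antitone (hM : 1 ≤ M) {c c' : ℕ} (hc : c' ≤ c) :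
    maxLength M c ≤ maxLength M c' := by
  unfold maxLength
  split_ifs <;> omega

lemma isOuterBoundaryEdge_of_length_eq (hb : IsBoundaryEdge M π y z) (hc : π.count Sym.e ≤ 2)
    (hz : z = π.length + 1) (hl : π.length = maxLength M (π.count Sym.e)) :
    IsOuterBoundaryEdge M π y z := by
  refine ⟨hb, hz, ?_⟩
  unfold maxLength at hl
  split_ifs at hl <;> omega

lemma le_maxLength_of_isSideBoundaryEdge (hπ : memB M π) (h : IsSideBoundaryEdge M π y z) :
    z ≤ maxLength M (π.count Sym.e) := by
  have hz := le_of_ladder_adj h.1.2.2.1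
  have hl := length_le_maxLength hπ
  by_contra hlt
  exact h.2 (isOuterBoundaryEdge_of_length_eq h.1 hπ.1.2.2.1 (by omega) (by omega))

/-- Below the length bound, the condition `π(2M) ≠ e` resp. `π(M + 1) ≠ e` of `B_M` only
concerns the last symbol. -/
lemma memB_of_length_le_maxLength {ρ : List Sym} (hPi : memPi ρ) (hne : ρ ≠ [])
    (hfan : ¬ hasFan ρ M) (hl : ρ.length ≤ maxLength M (ρ.count Sym.e))
    (hlast : ∀ j, ρ.length ≤ j → nth ρ j ≠ some Sym.e) : memB M ρ := by
  refine ⟨hPi, hne, hfan, ?_⟩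
  have hc := hPi.2.2.1
  unfold maxLength at hl
  split_ifs at hl with h0 h1
  · exact Or.inl ⟨h0, hl⟩
  · exact Or.inr (Or.inl ⟨h1, hl, hlast _ hl⟩)
  · exact Or.inr (Or.inr ⟨by omega, hl, hlast _ hl⟩)

end LengthBound

section SideBoundary

variable {M : ℕ} {π : List Sym} {y z : ℕ}

lemma hasFan_boundaryWord (hM : 1 ≤ M) (hπ : memB M π) (h : IsSideBoundaryEdge M π y z) :
    hasFan (boundaryWord π y z) M := by
  obtain ⟨hy, hyz, hadj, hπy, hnotB⟩ := h.1
  have hz := le_of_ladder_adj hadj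
  have hlen := length_boundaryWord (y := y) hyz hz
  by_contra hfan
  refine hnotB (memB_of_length_le_maxLength ?_ ?_ hfan ?_ fun j hj => ?_)
  · exact memPi_boundaryWord hπ.1 hy hyz (ladder_adj.mp hadj).1 hπy
  · exact List.ne_nil_of_length_pos (by omega)
  · calc (boundaryWord π y z).length = z := hlen
      _ ≤ maxLength M (π.count Sym.e) := le_maxLength_of_isSideBoundaryEdge hπ h
      _ ≤ _ := maxLength_antitone hM count_boundaryWord_le
  · exact nth_boundaryWord_ne_e hyz (hlen ▸ hj)

/-- As `L_π` has no `M`-fan, an `M`-fan of `L_{π'}` must use one of the new edges `z(z+1)`,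
`y(z+1)` of `L_{π'}`; only the second fits, as the top edge of a fan at `y`. -/
lemma eq_and_fanTop_of_hasFanAt_boundaryWord {a : ℕ} (hM : 2 ≤ M) (hy : 0 < y) (hyz : y < z)
    (hadj : (ladder π).Adj y z) (hno : ¬ hasFan π M) (ha : hasFanAt (boundaryWord π y z) M a) :
    a = y ∧ fanTop (nth π (y - 2)) M y = z + 1 := by
  have hz := le_of_ladder_adj hadj
  obtain ⟨ha0, hT⟩ := hasFanAt_iff.mp ha
  have htop := le_of_ladder_adj (hT _ (fanTop_mem (by omega)))
  rw [length_boundaryWord hyz hz] at htop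
  have haz : a < z := by
    have := add_le_fanTop (c := nth (boundaryWord π y z) (a - 2)) (f := M) (a := a)
    omega
  rw [nth_boundaryWord_of_le hz (by omega)] at hT htop
  obtain ⟨b, hb, hnew⟩ : ∃ b ∈ fanVertices (nth π (a - 2)) M a, ¬ (ladder π).Adj a b := by
    by_contra! hall
    exact hno ⟨a, hasFanAt_iff.mpr ⟨ha0, hall⟩⟩
  obtain ⟨rfl, rfl⟩ := (adj_boundaryWord hy hyz hadj haz (hT b hb)).resolve_left hnew
  exact ⟨rfl, le_antisymm htop (le_fanTop hb)⟩

lemma hasFanAt_pred_of_hasFanAt_boundaryWord (hM : 1 ≤ M) (hy : 0 < y) (hyz : y < z)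
    (hadj : (ladder π).Adj y z) (ha : hasFanAt (boundaryWord π y z) M y)
    (htop : fanTop (nth π (y - 2)) M y = z + 1) : hasFanAt π (M - 1) y := by
  obtain ⟨hy0, hT⟩ := hasFanAt_iff.mp ha
  rw [nth_boundaryWord_of_le (le_of_ladder_adj hadj) (by omega)] at hT
  refine hasFanAt_iff.mpr ⟨hy0, fun b hb => ?_⟩
  obtain ⟨hbtop, hb⟩ := Finset.mem_erase.mp (fanVertices_pred_subset hM hb)
  exact (adj_boundaryWord hy hyz hadj hyz (hT b hb)).resolve_right fun h => hbtop (htop ▸ h.2)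

/-- Each edge `y(j+1)` of the fan with `y < j` is created by a symbol `π(j) ∈ {0, 1}`, so the
positions `y, …, y + f` carry no `e`. -/
lemma count_e_add_le_length_of_hasFanAt {f : ℕ} (hf : hasFanAt π f y)
    (hy2 : nth π (y - 2) ≠ some Sym.e) (hπy : nth π y ≠ some Sym.e) :
    π.count Sym.e + (f + 1) ≤ π.length := by
  obtain ⟨hy0, hT⟩ := hasFanAt_iff.mp hf
  simp only [fanVertices, if_neg hy2, Finset.mem_Icc] at hT
  have hlen := le_of_ladder_adj (hT (y + f + 1) (by omega))
  have := count_add_le_length (π := π) (a := Sym.e) (lo := y) (hi := y + f) hy0 (by omega)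
    fun j hj => ?_
  · omega
  rw [Finset.mem_Icc] at hj
  rcases hj.1.eq_or_lt with rfl | hlt
  · exact hπy
  · obtain ⟨hsym, -⟩ :=
      mem_ladderEdges_of_add_one_lt (ladder_adj.mp (hT (j + 1) (by omega))).1 (by omega)
    rw [Nat.add_sub_cancel] at hsym
    rcases hsym with ⟨h, -⟩ | h <;> simp [h]

lemma count_e_le_one_of_isSideBoundaryEdge (hπ : memB M π) (h : IsSideBoundaryEdge M π y z)
    (hf : hasFanAt π (M - 1) y) (htop : fanTop (nth π (y - 2)) M y = z + 1) :
    π.count Sym.e ≤ 1 := by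
  have hl := length_le_maxLength hπ
  have hz := le_of_ladder_adj h.1.2.2.1
  by_contra hc
  have hc2 : π.count Sym.e = 2 := by have := hπ.1.2.2.1; omega
  rw [hc2, maxLength_two] at hl
  by_cases hy2 : nth π (y - 2) = some Sym.e
  · -- then `z = y + M - 1 ≥ M + 2`, which forces `yz` to be an outer boundary edge
    have := (le_length_of_nth_eq_some hy2).1
    simp only [fanTop, if_pos hy2] at htop
    exact h.2 (isOuterBoundaryEdge_of_length_eq h.1 (by omega) (by omega)
      (by rw [hc2, maxLength_two]; omega))
  · have := count_e_add_le_length_of_hasFanAt hf hy2 h.1.2.2.2.1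
    omega

end SideBoundary

/-- Let `M ≥ 3`, `π ∈ B_M`, and let `yz` (with `0 < y < z`) be a side
boundary edge of `L_π` with respect to `B_M`. Then `π` contains at most one copy of `e`;
`y < z - 1`; `L_π` has an `(M-1)`-fan at `y` while `L_{π'}` has an `M`-fan at `y`; and
`z = y + M` if `π(y-2) ≠ e`, whereas `z = y + M - 1` if `π(y-2) = e`. -/
theorem side_boundary_structure (M : ℕ) (hM : 3 ≤ M) (π : List Sym)
    (hπ : memB M π) (y z : ℕ) (h : IsSideBoundaryEdge M π y z) :
    π.count Sym.e ≤ 1 ∧ y + 1 < z ∧ hasFanAt π (M - 1) y ∧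
      hasFanAt (boundaryWord π y z) M y ∧
      (nth π (y - 2) ≠ some Sym.e → z = y + M) ∧
      (nth π (y - 2) = some Sym.e → z = y + M - 1) := by
  obtain ⟨hy, hyz, hadj, -, -⟩ := h.1
  obtain ⟨a, ha⟩ := hasFan_boundaryWord (by omega) hπ h
  obtain ⟨rfl, htop⟩ :=
    eq_and_fanTop_of_hasFanAt_boundaryWord (by omega) hy hyz hadj hπ.2.2.1 ha
  have hfan := hasFanAt_pred_of_hasFanAt_boundaryWord (by omega) hy hyz hadj ha htop
  have hM_le := add_le_fanTop (c := nth π (a - 2)) (f := M) (a := a)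
  refine ⟨count_e_le_one_of_isSideBoundaryEdge hπ h hfan htop, by omega, hfan, ha,
    fun he => ?_, fun he => ?_⟩ <;> simp only [fanTop, he, if_false, if_true] at htop <;> omega

end TriangleRemoval
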